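/- arXiv:2201.03747 — 2 statements merged into one kernel-verified Lean document; each statement's English description precedes it below -/
import Mathlib

section
/- Let s > 0 and a, b ∈ ℝ^d with b_i − a_i ≥ 2/s for all i. Define F(x) = ρ₂(1 − s²·Σ_{i=1}^d (ρ₂(−x_i + a_i + 1/s) + ρ₂(x_i − b_i + 1/s))), where ρ₂(t) = max(0,t)². Then: (i) for every x ∈ ℝ^d such that for each coordinate i, x_i ∉ [a_i, a_i + 1/s) and x_i ∉ (b_i − 1/s, b_i), we have F(x) = 1 if x ∈ [a, b) (coordinatewise) and F(x) = 0 otherwise; (ii) for all x ∈ ℝ^d, 0 ≤ F(x) ≤ 1 and |F(x) − 𝟙_{[a,b)}(x)| ≤ 1. -/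
open Classical in
/-- A two-hidden-layer ReQU network computes the indicator of the half-open box
`[a, b)` exactly away from the `1/s`-neighborhood of its boundary, and is
always in `[0,1]`. -/
theorem requ_box_indicator (d : ℕ) (s : ℝ) (hs : 0 < s) (a b : Fin d → ℝ)
    (hab : ∀ i, 2 / s ≤ b i - a i)
    (F : (Fin d → ℝ) → ℝ)
    (hF : ∀ x, F x = max 0 (1 - s ^ 2 * ∑ i,
      (max 0 (-x i + a i + 1 / s) ^ 2 + max 0 (x i - b i + 1 / s) ^ 2)) ^ 2) :
    (∀ x : Fin d → ℝ,
      (∀ i, x i ∉ Set.Ico (a i) (a i + 1 / s) ∧ x i ∉ Set.Ioo (b i - 1 / s) (b i)) →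
      F x = if ∀ i, x i ∈ Set.Ico (a i) (b i) then 1 else 0) ∧
    (∀ x : Fin d → ℝ, 0 ≤ F x ∧ F x ≤ 1 ∧
      |F x - if ∀ i, x i ∈ Set.Ico (a i) (b i) then 1 else 0| ≤ 1) := by
  have hSnn : ∀ x : Fin d → ℝ,
      0 ≤ ∑ i, (max 0 (-x i + a i + 1 / s) ^ 2 + max 0 (x i - b i + 1 / s) ^ 2) := by
    intro x
    apply Finset.sum_nonneg
    intro i _
    positivity
  constructor
  · intro x hx
    by_cases hbox : ∀ i, x i ∈ Set.Ico (a i) (b i)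
    · rw [if_pos hbox, hF]
      have hz : ∀ i ∈ Finset.univ,
          (max 0 (-x i + a i + 1 / s) ^ 2 + max 0 (x i - b i + 1 / s) ^ 2) = 0 := by
        intro i _
        have h1 := (hx i).1
        have h2 := (hx i).2
        have hb := hbox i
        rw [Set.mem_Ico] at hb
        have ha1 : a i + 1 / s ≤ x i := by
          rcases le_or_gt (a i + 1 / s) (x i) with h | h
          · exact h
          · exact absurd (Set.mem_Ico.mpr ⟨hb.1, h⟩) h1
        have hb1 : x i ≤ b i - 1 / s := by
          rcases le_or_gt (x i) (b i - 1 / s) with h | h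
          · exact h
          · exact absurd (Set.mem_Ioo.mpr ⟨h, hb.2⟩) h2
        have e1 : max 0 (-x i + a i + 1 / s) = 0 := max_eq_left (by linarith)
        have e2 : max 0 (x i - b i + 1 / s) = 0 := max_eq_left (by linarith)
        rw [e1, e2]; ring
      rw [Finset.sum_eq_zero hz]
      norm_num
    · rw [if_neg hbox, hF]
      push_neg at hbox
      obtain ⟨i, hi⟩ := hbox
      simp only [Set.mem_Ico, not_and_or, not_le, not_lt] at hi
      have hterm : 1 / s ^ 2 ≤
          max 0 (-x i + a i + 1 / s) ^ 2 + max 0 (x i - b i + 1 / s) ^ 2 := by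
        rcases hi with h | h
        · have h1 : 1 / s ≤ max 0 (-x i + a i + 1 / s) :=
            le_max_of_le_right (by linarith)
          have h0 : (0:ℝ) ≤ 1 / s := by positivity
          have h2 := pow_le_pow_left₀ h0 h1 2
          have h3 : (1 / s) ^ 2 = 1 / s ^ 2 := by field_simp
          nlinarith [sq_nonneg (max 0 (x i - b i + 1 / s))]
        · have h1 : 1 / s ≤ max 0 (x i - b i + 1 / s) :=
            le_max_of_le_right (by linarith)
          have h0 : (0:ℝ) ≤ 1 / s := by positivity
          have h2 := pow_le_pow_left₀ h0 h1 2
          have h3 : (1 / s) ^ 2 = 1 / s ^ 2 := by field_simp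
          nlinarith [sq_nonneg (max 0 (-x i + a i + 1 / s))]
      have hS : 1 / s ^ 2 ≤
          ∑ j, (max 0 (-x j + a j + 1 / s) ^ 2 + max 0 (x j - b j + 1 / s) ^ 2) :=
        le_trans hterm (Finset.single_le_sum (f := fun j => (max 0 (-x j + a j + 1 / s) ^ 2 + max 0 (x j - b j + 1 / s) ^ 2)) (fun j _ => by positivity)
          (Finset.mem_univ i))
      have hs2 : (0:ℝ) < s ^ 2 := by positivity
      have hge : 1 ≤ s ^ 2 *
          ∑ j, (max 0 (-x j + a j + 1 / s) ^ 2 + max 0 (x j - b j + 1 / s) ^ 2) := by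
        have := mul_le_mul_of_nonneg_left hS (le_of_lt hs2)
        rw [mul_one_div, div_self (ne_of_gt hs2)] at this
        linarith
      have hmax : max 0 (1 - s ^ 2 *
          ∑ j, (max 0 (-x j + a j + 1 / s) ^ 2 + max 0 (x j - b j + 1 / s) ^ 2)) = 0 :=
        max_eq_left (by linarith)
      rw [hmax]
      norm_num
  · intro x
    have h01 : 0 ≤ F x ∧ F x ≤ 1 := by
      rw [hF]
      constructor
      · positivity
      · have h1 : max 0 (1 - s ^ 2 *
            ∑ i, (max 0 (-x i + a i + 1 / s) ^ 2 + max 0 (x i - b i + 1 / s) ^ 2)) ≤ 1 := by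
          apply max_le (by norm_num)
          nlinarith [hSnn x]
        nlinarith [le_max_left 0 (1 - s ^ 2 *
          ∑ i, (max 0 (-x i + a i + 1 / s) ^ 2 + max 0 (x i - b i + 1 / s) ^ 2))]
    refine ⟨h01.1, h01.2, ?_⟩
    by_cases hbox : ∀ i, x i ∈ Set.Ico (a i) (b i)
    · rw [if_pos hbox]
      rw [abs_le]
      constructor <;> linarith [h01.1, h01.2]
    · rw [if_neg hbox]
      rw [abs_le]
      constructor <;> linarith [h01.1, h01.2]
end

section
/- With F as in the box-indicator lemma and y ∈ ℝ with |y| ≤ s, define G(x,y) = φ_×(y, F(x)) where φ_×(u,v) = (ρ₂(u+v)+ρ₂(−u−v)−ρ₂(−u+v)−ρ₂(u−v))/4. Then G(x,y) = y·𝟙_{[a,b)}(x) for all x ∈ ℝ^d avoiding the 1/s-boundary strips (x_i ∉ [a_i, a_i+1/s) ∪ (b_i−1/s, b_i) for all i), and |G(x,y) − y·𝟙_{[a,b)}(x)| ≤ |y| for all x ∈ ℝ^d. -/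
private lemma sq_split (t : ℝ) : max 0 t ^ 2 + max 0 (-t) ^ 2 = t ^ 2 := by
  rcases le_total t 0 with h | h
  · rw [max_eq_left h, max_eq_right (neg_nonneg.mpr h)]; ring
  · rw [max_eq_right h, max_eq_left (neg_nonpos.mpr h)]; ring

private lemma prod_id (u v : ℝ) :
    (max 0 (u + v) ^ 2 + max 0 (-u - v) ^ 2 - max 0 (-u + v) ^ 2
      - max 0 (u - v) ^ 2) / 4 = u * v := by
  have h1 := sq_split (u + v)
  have h2 := sq_split (-u + v)
  have e1 : -(u + v) = -u - v := by ring
  have e2 : -(-u + v) = u - v := by ring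
  rw [e1] at h1; rw [e2] at h2
  nlinarith [h1, h2]

open Classical in
/-- Multiplying the approximate ReQU box indicator `F` by `y` via the exact
ReQU product gate `φ_×` yields `y · 𝟙_{[a,b)}(x)` away from the `1/s`-boundary
strips, with error at most `|y|` everywhere. -/
theorem requ_box_indicator_product (d : ℕ) (s : ℝ) (hs : 0 < s)
    (a b : Fin d → ℝ) (hab : ∀ i, 2 / s ≤ b i - a i)
    (y : ℝ) (hy : |y| ≤ s)
    (F : (Fin d → ℝ) → ℝ)
    (hF : ∀ x, F x = max 0 (1 - s ^ 2 * ∑ i,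
      (max 0 (-x i + a i + 1 / s) ^ 2 + max 0 (x i - b i + 1 / s) ^ 2)) ^ 2)
    (G : (Fin d → ℝ) → ℝ)
    (hG : ∀ x, G x = (max 0 (y + F x) ^ 2 + max 0 (-y - F x) ^ 2
      - max 0 (-y + F x) ^ 2 - max 0 (y - F x) ^ 2) / 4) :
    (∀ x : Fin d → ℝ,
      (∀ i, x i ∉ Set.Ico (a i) (a i + 1 / s) ∧ x i ∉ Set.Ioo (b i - 1 / s) (b i)) →
      G x = y * if ∀ i, x i ∈ Set.Ico (a i) (b i) then 1 else 0) ∧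
    (∀ x : Fin d → ℝ,
      |G x - y * if ∀ i, x i ∈ Set.Ico (a i) (b i) then 1 else 0| ≤ |y|) := by
  have hGy : ∀ x, G x = y * F x := by
    intro x
    rw [hG x]
    have := prod_id y (F x)
    convert this using 3 <;> ring
  -- F is in [0,1]
  have hsum : ∀ x : Fin d → ℝ, (0:ℝ) ≤ ∑ i,
      (max 0 (-x i + a i + 1 / s) ^ 2 + max 0 (x i - b i + 1 / s) ^ 2) := by
    intro x
    apply Finset.sum_nonneg
    intro i _
    positivity
  have hF0 : ∀ x, 0 ≤ F x := by intro x; rw [hF x]; positivity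
  have hF1 : ∀ x, F x ≤ 1 := by
    intro x
    rw [hF x]
    set A := 1 - s ^ 2 * ∑ i,
      (max 0 (-x i + a i + 1 / s) ^ 2 + max 0 (x i - b i + 1 / s) ^ 2) with hA
    have hAle1 : A ≤ 1 := by
      rw [hA]
      nlinarith [hsum x, sq_nonneg s]
    have hAle : max 0 A ≤ 1 := max_le (by norm_num) hAle1
    nlinarith [le_max_left 0 A]
  -- F equals the indicator off the strips
  have hFeq : ∀ x : Fin d → ℝ,
      (∀ i, x i ∉ Set.Ico (a i) (a i + 1 / s) ∧ x i ∉ Set.Ioo (b i - 1 / s) (b i)) →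
      F x = if ∀ i, x i ∈ Set.Ico (a i) (b i) then 1 else 0 := by
    intro x hx
    by_cases hin : ∀ i, x i ∈ Set.Ico (a i) (b i)
    · rw [if_pos hin, hF x]
      have hz : ∑ i, (max 0 (-x i + a i + 1 / s) ^ 2
          + max 0 (x i - b i + 1 / s) ^ 2) = 0 := by
        apply Finset.sum_eq_zero
        intro i _
        obtain ⟨hai, hbi⟩ := hin i
        obtain ⟨h1, h2⟩ := hx i
        have ha' : a i + 1 / s ≤ x i := by
          by_contra h
          exact h1 ⟨hai, lt_of_not_ge h⟩
        have hb' : x i ≤ b i - 1 / s := by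
          by_contra h
          exact h2 ⟨lt_of_not_ge h, hbi⟩
        have e1 : max 0 (-x i + a i + 1 / s) = 0 := max_eq_left (by linarith)
        have e2 : max 0 (x i - b i + 1 / s) = 0 := max_eq_left (by linarith)
        rw [e1, e2]; ring
      rw [hz]
      norm_num
    · rw [if_neg hin, hF x]
      push_neg at hin
      obtain ⟨i, hi⟩ := hin
      simp only [Set.mem_Ico, not_and_or, not_le, not_lt] at hi
      have hterm : (1 / s) ^ 2 ≤ max 0 (-x i + a i + 1 / s) ^ 2
          + max 0 (x i - b i + 1 / s) ^ 2 := by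
        have h1s : 0 < 1 / s := by positivity
        rcases hi with h | h
        · have : 1 / s ≤ max 0 (-x i + a i + 1 / s) :=
            le_trans (by linarith) (le_max_right _ _)
          nlinarith [sq_nonneg (max 0 (x i - b i + 1 / s)), le_max_left 0 (-x i + a i + 1/s)]
        · have : 1 / s ≤ max 0 (x i - b i + 1 / s) :=
            le_trans (by linarith) (le_max_right _ _)
          nlinarith [sq_nonneg (max 0 (-x i + a i + 1 / s)), le_max_left 0 (x i - b i + 1/s)]
      have hsum_ge : (1 / s) ^ 2 ≤ ∑ j,
          (max 0 (-x j + a j + 1 / s) ^ 2 + max 0 (x j - b j + 1 / s) ^ 2) := by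
        refine le_trans hterm (Finset.single_le_sum
          (f := fun j => max 0 (-x j + a j + 1 / s) ^ 2 + max 0 (x j - b j + 1 / s) ^ 2)
          (fun j _ => by positivity) (Finset.mem_univ i))
      have hle : 1 - s ^ 2 * ∑ j,
          (max 0 (-x j + a j + 1 / s) ^ 2 + max 0 (x j - b j + 1 / s) ^ 2) ≤ 0 := by
        have hs2 : s ^ 2 * (1 / s) ^ 2 = 1 := by
          field_simp
        nlinarith [sq_nonneg s]
      rw [max_eq_left hle]
      norm_num
  constructor
  · intro x hx
    rw [hGy x, hFeq x hx]
  · intro x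
    rw [hGy x]
    have hind : (if ∀ i, x i ∈ Set.Ico (a i) (b i) then (1:ℝ) else 0) = 1 ∨
        (if ∀ i, x i ∈ Set.Ico (a i) (b i) then (1:ℝ) else 0) = 0 := by
      split <;> simp
    have h1 : |F x - (if ∀ i, x i ∈ Set.Ico (a i) (b i) then (1:ℝ) else 0)| ≤ 1 := by
      rcases hind with h | h <;> rw [h, abs_le] <;>
        constructor <;> linarith [hF0 x, hF1 x]
    calc |y * F x - y * (if ∀ i, x i ∈ Set.Ico (a i) (b i) then (1:ℝ) else 0)|
        = |y| * |F x - (if ∀ i, x i ∈ Set.Ico (a i) (b i) then (1:ℝ) else 0)| := by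
          rw [← abs_mul]; ring_nf
      _ ≤ |y| * 1 := mul_le_mul_of_nonneg_left h1 (abs_nonneg y)
      _ = |y| := mul_one _
end
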